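/- arXiv:1608.02500 — 2 statements merged into one kernel-verified Lean document; each statement's English description precedes it below -/
import Mathlib

section
/- Let X be a real Hilbert space, T x = Q x + π an affine map with Q bounded self-adjoint positive, ‖Q‖ ≤ 1, and Fix T nonempty, with U the positive square root of Id − Q. Let f : X → ℝ be convex Fréchet-differentiable with gradient ∇f and g : X → (−∞,∞] proper convex lower-semicontinuous with subdifferential ∂g. Then x* ∈ Fix T solves the variational inequality VIP(∇f + ∂g, Fix T) — i.e., there exists ξ* ∈ ∂g(x*) with ⟪y − x*, ∇f(x*) + ξ*⟫ ≥ 0 for all y ∈ Fix T — if and only if x* ∈ Fix T and (∇f(x*) + ∂g(x*)) ∩ closure(range U) ≠ ∅. -/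
open scoped InnerProductSpace

/-- The subdifferential of a function `g : X → (−∞, +∞]`. -/
def subdiff {X : Type*} [NormedAddCommGroup X] [InnerProductSpace ℝ X]
    (g : X → EReal) (x : X) : Set X :=
  {ξ : X | ∀ x' : X, g x + ((⟪x' - x, ξ⟫_ℝ : ℝ) : EReal) ≤ g x'}

/-- `x*` solves `VIP(∇f + ∂g, Fix T)`: `x* ∈ Fix T` and there is `ξ* ∈ ∂g(x*)` with
`⟪y − x*, ∇f(x*) + ξ*⟫ ≥ 0` for all `y ∈ Fix T`. -/
def solvesVIP {X : Type*} [NormedAddCommGroup X] [InnerProductSpace ℝ X]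
    (f' : X → X) (g : X → EReal) (T : X → X) (xs : X) : Prop :=
  T xs = xs ∧ ∃ ξ ∈ subdiff g xs, ∀ y : X, T y = y → 0 ≤ ⟪y - xs, f' xs + ξ⟫_ℝ

/-! `Fix T = x* + ker U` and `closure (range U) = (ker U)ᗮ`, so the variational inequality over
`Fix T` says that `∇f(x*) + ξ*` is nonnegative, hence zero, on the subspace `ker U`. -/

open Function in
theorem isFixedPt_affine_iff {M F : Type*} [AddCommGroup M] [FunLike F M M]
    [AddMonoidHomClass F M M] {Q : F} {p xs y : M} {T : M → M} (hT : ∀ x, T x = Q x + p)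
    (hxs : T xs = xs) : IsFixedPt T y ↔ IsFixedPt Q (y - xs) := by
  obtain rfl : p = xs - Q xs := eq_sub_of_add_eq' (hT xs ▸ hxs)
  rw [IsFixedPt, IsFixedPt, hT, map_sub, ← add_sub_assoc, sub_eq_iff_eq_add,
    sub_eq_sub_iff_add_eq_add]

theorem Submodule.forall_inner_nonneg_iff_mem_orthogonal {E : Type*} [NormedAddCommGroup E]
    [InnerProductSpace ℝ E] (K : Submodule ℝ E) (v : E) :
    (∀ z ∈ K, 0 ≤ ⟪z, v⟫_ℝ) ↔ v ∈ Kᗮ := by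
  rw [mem_orthogonal]
  refine ⟨fun h z hz => le_antisymm ?_ (h z hz), fun h z hz => (h z hz).ge⟩
  simpa [inner_neg_left] using h (-z) (K.neg_mem hz)

namespace IsSelfAdjoint

variable {𝕜 E : Type*} [RCLike 𝕜] [NormedAddCommGroup E] [InnerProductSpace 𝕜 E] [CompleteSpace E]
  {U : E →L[𝕜] E}

theorem ker_comp_self (hU : IsSelfAdjoint U) : (U ∘L U).ker = U.ker := by
  simpa [hU.adjoint_eq] using U.ker_adjoint_comp_self

theorem closure_range_eq_orthogonal_ker (hU : IsSelfAdjoint U) :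
    closure (Set.range U) = (U.kerᗮ : Set E) := by
  rw [U.orthogonal_ker, hU.adjoint_eq, Submodule.topologicalClosure_coe]
  rfl

end IsSelfAdjoint

theorem stmt8_general {X : Type*} [NormedAddCommGroup X] [InnerProductSpace ℝ X] [CompleteSpace X]
    (Q : X →L[ℝ] X)
    (U : X →L[ℝ] X) (hUsa : ∀ x y : X, ⟪U x, y⟫_ℝ = ⟪x, U y⟫_ℝ)
    (hU2 : U.comp U = 1 - Q)
    (p : X) (T : X → X) (hT : ∀ x, T x = Q x + p)
    (f' : X → X)
    (g : X → EReal)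
    (xs : X) :
    solvesVIP f' g T xs ↔
      (T xs = xs ∧ ∃ ξ ∈ subdiff g xs, f' xs + ξ ∈ closure (Set.range U)) := by
  have hU : IsSelfAdjoint U := ContinuousLinearMap.isSelfAdjoint_iff_isSymmetric.mpr hUsa
  have hker : ∀ z, Q z = z ↔ z ∈ U.ker := fun z => by
    rw [← hU.ker_comp_self, hU2, LinearMap.mem_ker, ContinuousLinearMap.coe_coe, sub_apply,
      one_apply_eq_self, sub_eq_zero, eq_comm]
  rw [solvesVIP, hU.closure_range_eq_orthogonal_ker]
  refine and_congr_right fun hxs => exists_congr fun ξ => and_congr_right fun _ => ?_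
  rw [SetLike.mem_coe, ← Submodule.forall_inner_nonneg_iff_mem_orthogonal]
  constructor
  · intro h z hz
    simpa using h (xs + z) ((isFixedPt_affine_iff hT hxs).2 (by
      simpa [Function.IsFixedPt] using (hker z).2 hz))
  · exact fun h y hy => h _ ((hker _).1 ((isFixedPt_affine_iff hT hxs).1 hy))

/-- Characterization of solutions of `VIP(∇f + ∂g, Fix T)` via the closure of the range of the
square root `U` of `Id − Q`. -/
theorem stmt8 {X : Type*} [NormedAddCommGroup X] [InnerProductSpace ℝ X] [CompleteSpace X]
    (Q : X →L[ℝ] X) (hsa : ∀ x y : X, ⟪Q x, y⟫_ℝ = ⟪x, Q y⟫_ℝ)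
    (hpos : ∀ x : X, 0 ≤ ⟪Q x, x⟫_ℝ) (hnorm : ‖Q‖ ≤ 1)
    (U : X →L[ℝ] X) (hUsa : ∀ x y : X, ⟪U x, y⟫_ℝ = ⟪x, U y⟫_ℝ)
    (hUpos : ∀ x : X, 0 ≤ ⟪U x, x⟫_ℝ) (hU2 : U.comp U = 1 - Q)
    (p : X) (T : X → X) (hT : ∀ x, T x = Q x + p) (hfix : ∃ w, T w = w)
    (f : X → ℝ) (hf : ConvexOn ℝ Set.univ f) (f' : X → X)
    (hf' : ∀ x, HasGradientAt f (f' x) x)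
    (g : X → EReal) (hgproper : (∀ x, g x ≠ ⊥) ∧ ∃ x, g x ≠ ⊤)
    (hglsc : LowerSemicontinuous g)
    (hgconvex : ∀ x y : X, ∀ θ : ℝ, 0 ≤ θ → θ ≤ 1 →
      g (θ • x + (1 - θ) • y) ≤ (θ : EReal) * g x + ((1 - θ : ℝ) : EReal) * g y)
    (xs : X) :
    solvesVIP f' g T xs ↔
      (T xs = xs ∧ ∃ ξ ∈ subdiff g xs, f' xs + ξ ∈ closure (Set.range U)) :=
  stmt8_general Q U hUsa hU2 p T hT f' g xs
end

section
/- Let X be a finite-dimensional real Hilbert space, T = Q + π an affine map with Q symmetric positive semidefinite and ‖Q‖ ≤ 1, Fix T nonempty, U the positive square root of Id − Q, f convex differentiable, g proper convex lsc, and λ ≠ 0. Then x* solves VIP(∇f + ∂g, Fix T) if and only if there exists v* ∈ X such that x* ∈ Fix T and −(1/λ) U v* ∈ ∇f(x*) + ∂g(x*). -/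
open scoped InnerProductSpace

/-- In a finite-dimensional real Hilbert space, `x*` solves `VIP(∇f + ∂g, Fix T)` iff there is a
`v*` with `x* ∈ Fix T` and `−(1/λ) U v* ∈ ∇f(x*) + ∂g(x*)`. -/
theorem stmt9 {X : Type*} [NormedAddCommGroup X] [InnerProductSpace ℝ X]
    [FiniteDimensional ℝ X]
    (Q : X →L[ℝ] X) (hsa : ∀ x y : X, ⟪Q x, y⟫_ℝ = ⟪x, Q y⟫_ℝ)
    (hpos : ∀ x : X, 0 ≤ ⟪Q x, x⟫_ℝ) (hnorm : ‖Q‖ ≤ 1)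
    (U : X →L[ℝ] X) (hUsa : ∀ x y : X, ⟪U x, y⟫_ℝ = ⟪x, U y⟫_ℝ)
    (hUpos : ∀ x : X, 0 ≤ ⟪U x, x⟫_ℝ) (hU2 : U.comp U = 1 - Q)
    (p : X) (T : X → X) (hT : ∀ x, T x = Q x + p) (hfix : ∃ w, T w = w)
    (f : X → ℝ) (hf : ConvexOn ℝ Set.univ f) (f' : X → X)
    (hf' : ∀ x, HasGradientAt f (f' x) x)
    (g : X → EReal) (hgproper : (∀ x, g x ≠ ⊥) ∧ ∃ x, g x ≠ ⊤)
    (hglsc : LowerSemicontinuous g)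
    (hgconvex : ∀ x y : X, ∀ θ : ℝ, 0 ≤ θ → θ ≤ 1 →
      g (θ • x + (1 - θ) • y) ≤ (θ : EReal) * g x + ((1 - θ : ℝ) : EReal) * g y)
    (lam : ℝ) (hlam : lam ≠ 0) (xs : X) :
    solvesVIP f' g T xs ↔
      ∃ vs : X, T xs = xs ∧ ∃ ξ ∈ subdiff g xs, -(1 / lam) • U vs = f' xs + ξ := by

  -- U ∘ U = 1 - Q pointwise
  have hUU : ∀ d : X, U (U d) = d - Q d := by
    intro d
    have := congrArg (fun A : X →L[ℝ] X => A d) hU2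
    simpa using this
  -- ker U = ker (I - Q)
  have hker : ∀ d : X, Q d = d ↔ U d = 0 := by
    intro d
    constructor
    · intro h
      have h1 : ⟪U d, U d⟫_ℝ = 0 := by
        rw [hUsa, hUU, h, sub_self, inner_zero_right]
      exact inner_self_eq_zero.mp h1
    · intro h
      have h2 : d - Q d = 0 := by rw [← hUU d, h, map_zero]
      have := sub_eq_zero.mp h2
      exact this.symm
  -- surjectivity onto (ker U)ᗮ
  have hkey : ∀ w : X, (∀ d : X, U d = 0 → ⟪d, w⟫_ℝ = 0) → ∃ z, U z = w := by
    intro w hw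
    set Ul := (U : X →ₗ[ℝ] X) with hUl
    have hle : LinearMap.range Ul ≤ (LinearMap.ker Ul)ᗮ := by
      rintro _ ⟨z, rfl⟩
      rw [Submodule.mem_orthogonal]
      intro u hu
      have hu0 : U u = 0 := hu
      show ⟪u, U z⟫_ℝ = 0
      rw [← hUsa, hu0, inner_zero_left]
    have hfin1 := LinearMap.finrank_range_add_finrank_ker Ul
    have hfin2 := Submodule.finrank_add_finrank_orthogonal (K := LinearMap.ker Ul)
    have heq : LinearMap.range Ul = (LinearMap.ker Ul)ᗮ := by
      apply Submodule.eq_of_le_of_finrank_le hle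
      omega
    have hwmem : w ∈ (LinearMap.ker Ul)ᗮ := by
      rw [Submodule.mem_orthogonal]
      intro u hu
      exact hw u hu
    rw [← heq] at hwmem
    obtain ⟨z, hz⟩ := hwmem
    exact ⟨z, hz⟩
  constructor
  · rintro ⟨hfx, ξ, hξ, hvip⟩
    have hw : ∀ d : X, U d = 0 → ⟪d, f' xs + ξ⟫_ℝ = 0 := by
      intro d hd
      have hQd : Q d = d := (hker d).mpr hd
      have hTxs : Q xs + p = xs := by rw [← hT]; exact hfx
      have hfix1 : T (xs + d) = xs + d := by
        rw [hT, map_add, hQd]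
        calc Q xs + d + p = (Q xs + p) + d := by abel
        _ = xs + d := by rw [hTxs]
      have hfix2 : T (xs - d) = xs - d := by
        rw [hT, map_sub, hQd]
        calc Q xs - d + p = (Q xs + p) - d := by abel
        _ = xs - d := by rw [hTxs]
      have h1 := hvip (xs + d) hfix1
      have h2 := hvip (xs - d) hfix2
      simp only [add_sub_cancel_left, sub_sub_cancel_left] at h1 h2
      rw [inner_neg_left] at h2
      linarith
    obtain ⟨z, hz⟩ := hkey (f' xs + ξ) hw
    refine ⟨(-lam) • z, hfx, ξ, hξ, ?_⟩
    rw [map_smul, smul_smul, ← hz]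
    have : -(1 / lam) * -lam = 1 := by field_simp
    rw [this, one_smul]
  · rintro ⟨vs, hfx, ξ, hξ, heq⟩
    refine ⟨hfx, ξ, hξ, ?_⟩
    intro y hy
    rw [hT] at hy
    have hTxs : Q xs + p = xs := by rw [← hT]; exact hfx
    have hQd : Q (y - xs) = y - xs := by
      rw [map_sub]
      calc Q y - Q xs = (Q y + p) - (Q xs + p) := by abel
      _ = y - xs := by rw [hy, hTxs]
    have hUd : U (y - xs) = 0 := (hker _).mp hQd
    rw [← heq, inner_smul_right, ← hUsa, hUd, inner_zero_left, mul_zero]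
end
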